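/- Let a > 0 and 0 < t < a (the subcritical regime, r = 1), and let x_L := (8a² + 20at − t² − √t·(8a+t)^{3/2})/(8a) > 0 be the left edge of the support. Then the limit C₁(t,a) := lim_{x → x_L⁺} ρ(x;1,t,a)/√(x − x_L) exists, is finite and positive, and satisfies lim_{t → a⁻} (a − t)^{5/2}·C₁(t,a) = 9a/(4π). That is, ρ(x;1,t,a) ≃ C₁(t,a)·(x − x_L)^{β₁} with β₁ = 1/2 as x → x_L⁺, and C₁(t,a) ≃ (9a/(4π))·(t_c(a) − t)^{−γ₁} with γ₁ = 5/2 as t → t_c(a)⁻ = a⁻. -/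

import Mathlib

open Filter Topology

/-- The real cube root. -/
noncomputable def cbrt (y : ℝ) : ℝ :=
  if 0 ≤ y then y ^ ((1 : ℝ)/3) else -((-y) ^ ((1 : ℝ)/3))

/-- The cubic polynomial `S(x; r, t, a)`. -/
noncomputable def S (x r t a : ℝ) : ℝ :=
  4*a*x^3 - (8*a^2 + 4*a*(3*r+2)*t - t^2)*x^2
    + 2*(2*a^3 - 2*a^2*(5*r-2)*t + a*(r*(6*r-1)+1)*t^2 - (r+1)*t^3)*x
    + (r-1)^2*t^2*(a^2 - a*(4*r-2)*t + t^2)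

/-- The function `g(x; r, t, a)`. -/
noncomputable def g (x r t a : ℝ) : ℝ :=
  -2*x^3 + 3*((2*r+1)*t + 6*a)*x^2
    - 3*((r-1)*((2*r+1)*t - 3*a)*t - Real.sqrt (-3 * S x r t a))*x
    + 2*(r-1)^3*t^3

/-- The function `φ(x; r, t, a)`. -/
noncomputable def phi (x r t a : ℝ) : ℝ :=
  -(2/3)*(x - (r-1)*t)
    - (cbrt 2 / 3) * ((x^2 + (3*a - (2*r+1)*t)*x + (r-1)^2*t^2) / cbrt (g x r t a))
    - cbrt (g x r t a) / (3 * cbrt 2)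

/-- The function `D(x; r, t, a) = -4aφ + (t-a)²`. -/
noncomputable def Df (x r t a : ℝ) : ℝ := -4*a*phi x r t a + (t-a)^2

/-- The three-parametric Marcenko–Pastur density `ρ(x; r, t, a)`. -/
noncomputable def rho (x r t a : ℝ) : ℝ :=
  Real.sqrt (2*(t - a + Real.sqrt (Df x r t a))*x - (phi x r t a)^2)
    / (2*Real.pi*r*t*x)

/-- The real part `R(x; r, t, a)` of the boundary value of the Green's function. -/
noncomputable def Rf (x r t a : ℝ) : ℝ :=
  (2*x + (r-1)*t)/(3*r*t*x)
    - (x^2 + (3*a - (2*r+1)*t)*x + (r-1)^2*t^2) / (3 * (cbrt 2)^2 * r * t * cbrt (g x r t a) * x)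
    - cbrt (g x r t a) / (6 * cbrt 2 * r * t * x)


/-!
For `r = 1` the cubic `S` factors as `4ax(x - x_L)(x - x_R)` with `x_L + x_R` and
`a x_L x_R = (a - t)³` read off from the edge formulas, and `g = P + √(P² - 4Q³)` for
`P = -2x³ + (9t + 18a)x²`, `Q = x² + 3(a - t)x`. Cardano's formula then makes `φ` a root of
`φ³ + 2xφ² + (x² + (t - a)x)φ + tx² = 0`. This cubic turns `√D` into a rational expression in `φ`
and shows that the radicand of `ρ` times `E²`, with `E = 3φ² + 4xφ + x² + (t - a)x`, is `-x²S`.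
Hence `ρ / √(x - x_L) = √(ax(x_R - x)) / (πtE)` near `x_L`, a function continuous at `x_L`,
where `φ = -2(x_L + √Q)/3` and `E = Q`. As `t → a`, `x_L ≈ (a - t)³/(a x_R)` and `x_R → 27a/4`,
which produces the exponent `5/2`.
-/

lemma cbrt_pow_three (y : ℝ) : cbrt y ^ 3 = y := by
  unfold cbrt
  split_ifs with h
  · rw [← Real.rpow_natCast, ← Real.rpow_mul h]
    norm_num
  · rw [neg_pow, ← Real.rpow_natCast ((-y) ^ _), ← Real.rpow_mul (by linarith)]
    norm_num

lemma cbrt_pos {y : ℝ} (hy : 0 < y) : 0 < cbrt y := by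
  rw [cbrt, if_pos hy.le]
  exact Real.rpow_pos_of_pos hy _

lemma cbrt_ne_zero {y : ℝ} (hy : y ≠ 0) : cbrt y ≠ 0 := fun h =>
  hy (by rw [← cbrt_pow_three y, h]; ring)

lemma cbrt_eq_of_pow_three {c y : ℝ} (hc : 0 ≤ c) (h : c ^ 3 = y) : cbrt y = c := by
  rw [cbrt, if_pos (h ▸ by positivity), ← h, ← Real.rpow_natCast, ← Real.rpow_mul hc]
  norm_num

lemma continuous_cbrt : Continuous cbrt := by
  have hpow : Continuous fun y : ℝ => y ^ ((1 : ℝ)/3) := Real.continuous_rpow_const (by norm_num)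
  refine Continuous.if_le hpow (hpow.comp continuous_neg).neg continuous_const continuous_id ?_
  rintro y rfl
  simp [Real.zero_rpow]

lemma sq_sqrt_mul_rpow_three_halves {t u : ℝ} (ht : 0 ≤ t) (hu : 0 ≤ u) :
    (√t * u ^ ((3:ℝ)/2)) ^ 2 = t * u ^ 3 := by
  rw [mul_pow, Real.sq_sqrt ht, ← Real.rpow_natCast (u ^ _), ← Real.rpow_mul hu]
  norm_num

noncomputable def leftEdge (a t : ℝ) : ℝ :=
  (8*a^2 + 20*a*t - t^2 - Real.sqrt t * (8*a+t) ^ ((3:ℝ)/2))/(8*a)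

noncomputable def rightEdge (a t : ℝ) : ℝ :=
  (8*a^2 + 20*a*t - t^2 + Real.sqrt t * (8*a+t) ^ ((3:ℝ)/2))/(8*a)

section Edges

variable {a t : ℝ}

lemma leftEdge_add_rightEdge (ha : a ≠ 0) :
    4*a*(leftEdge a t + rightEdge a t) = 8*a^2 + 20*a*t - t^2 := by
  unfold leftEdge rightEdge
  field_simp
  ring

lemma leftEdge_mul_rightEdge (ha : 0 < a) (ht : 0 ≤ t) :
    a*(leftEdge a t * rightEdge a t) = (a-t)^3 := by
  have hw := sq_sqrt_mul_rpow_three_halves ht (by linarith : 0 ≤ 8*a+t)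
  unfold leftEdge rightEdge
  generalize √t * (8*a+t) ^ ((3:ℝ)/2) = w at hw ⊢
  field_simp
  linear_combination -hw

lemma S_one_eq (ha : 0 < a) (ht : 0 ≤ t) (x : ℝ) :
    S x 1 t a = 4*a*x*((x - leftEdge a t)*(x - rightEdge a t)) := by
  unfold S
  linear_combination x^2 * leftEdge_add_rightEdge (t := t) ha.ne'
    - 4*x * leftEdge_mul_rightEdge ha ht

lemma leftEdge_lt_rightEdge (ha : 0 < a) (ht : 0 < t) : leftEdge a t < rightEdge a t := by
  have hw : 0 < √t * (8*a+t) ^ ((3:ℝ)/2) :=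
    mul_pos (Real.sqrt_pos.2 ht) (Real.rpow_pos_of_pos (by linarith) _)
  unfold leftEdge rightEdge
  gcongr
  linarith

lemma leftEdge_pos (ha : 0 < a) (ht : 0 < t) (hta : t < a) : 0 < leftEdge a t := by
  have hR : 0 < rightEdge a t := by
    unfold rightEdge
    have : 0 ≤ √t * (8*a+t) ^ ((3:ℝ)/2) := by positivity
    apply div_pos _ (by positivity)
    nlinarith
  have hprod := leftEdge_mul_rightEdge ha ht.le
  have : 0 < a * (leftEdge a t * rightEdge a t) := by rw [hprod]; exact pow_pos (by linarith) 3
  exact pos_of_mul_pos_left (pos_of_mul_pos_right this ha.le) hR.le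

lemma sqrt_mul_rpow_three_halves_self (ha : 0 ≤ a) : √a * (8*a+a) ^ ((3:ℝ)/2) = 27*a^2 := by
  rw [← pow_left_inj₀ (by positivity) (by positivity) two_ne_zero,
    sq_sqrt_mul_rpow_three_halves ha (by linarith)]
  ring

lemma leftEdge_self (ha : 0 < a) : leftEdge a a = 0 := by
  rw [leftEdge, sqrt_mul_rpow_three_halves_self ha.le]
  field_simp
  ring

lemma rightEdge_self (ha : 0 < a) : rightEdge a a = 27*a/4 := by
  rw [rightEdge, sqrt_mul_rpow_three_halves_self ha.le]
  field_simp
  ring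

lemma continuous_leftEdge : Continuous (leftEdge a) := by
  unfold leftEdge
  fun_prop (disch := norm_num)

lemma continuous_rightEdge : Continuous (rightEdge a) := by
  unfold rightEdge
  fun_prop (disch := norm_num)

end Edges

lemma cardano {P Q G k c : ℝ} (hk : k ^ 3 = 2) (hc : c ^ 3 = G) (hG : G ≠ 0)
    (hquad : G ^ 2 - 2 * P * G + 4 * Q ^ 3 = 0) :
    (k * Q / c + c / k) ^ 3 = 3 * Q * (k * Q / c + c / k) + P := by
  have hk0 : k ≠ 0 := by rintro rfl; norm_num at hk
  have hc0 : c ≠ 0 := by rintro rfl; exact hG (by rw [← hc]; ring)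
  have hcube : (k * Q / c + c / k) ^ 3
      = k ^ 3 * Q ^ 3 / c ^ 3 + c ^ 3 / k ^ 3 + 3 * Q * (k * Q / c + c / k) := by
    field_simp
    ring
  have hP : 2 * Q ^ 3 / G + G / 2 = P := by
    field_simp
    linear_combination hquad
  rw [hcube, hk, hc, ← hP]
  ring

section DensityOne

variable {x t a : ℝ}

lemma g_one_eq : g x 1 t a = -2*x^3 + (9*t+18*a)*x^2 + 3*x*√(-3 * S x 1 t a) := by
  unfold g
  ring

lemma discr_eq_S_one :
    (-2*x^3 + (9*t+18*a)*x^2)^2 - 4*(x^2 + (3*a-3*t)*x)^3 = -27*x^2 * S x 1 t a := by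
  unfold S
  ring

lemma g_one_quadratic (hS : S x 1 t a ≤ 0) :
    g x 1 t a ^ 2 - 2*(-2*x^3 + (9*t+18*a)*x^2)*g x 1 t a + 4*(x^2 + (3*a-3*t)*x)^3 = 0 := by
  have hsq : √(-3 * S x 1 t a) ^ 2 = -3 * S x 1 t a := Real.sq_sqrt (by linarith)
  rw [g_one_eq]
  linear_combination 9*x^2 * hsq - discr_eq_S_one (x := x) (t := t) (a := a)

lemma phi_one_cubic (hS : S x 1 t a ≤ 0) (hg : g x 1 t a ≠ 0) :
    phi x 1 t a ^ 3 + 2*x*phi x 1 t a ^ 2 + (x^2 + (t-a)*x)*phi x 1 t a + t*x^2 = 0 := by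
  have hk0 : cbrt 2 ≠ 0 := (cbrt_pos two_pos).ne'
  have hc0 : cbrt (g x 1 t a) ≠ 0 := cbrt_ne_zero hg
  have hu := cardano (cbrt_pow_three 2) (cbrt_pow_three _) hg (g_one_quadratic hS)
  have hphi : phi x 1 t a = -(2*x + (cbrt 2 * (x^2 + (3*a-3*t)*x) / cbrt (g x 1 t a)
      + cbrt (g x 1 t a) / cbrt 2))/3 := by
    unfold phi
    field_simp
    ring
  rw [hphi]
  linear_combination (-1/27 : ℝ) * hu

lemma sqrt_Df_one (hx : 0 < x)
    (hφ : phi x 1 t a ^ 3 + 2*x*phi x 1 t a ^ 2 + (x^2 + (t-a)*x)*phi x 1 t a + t*x^2 = 0)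
    (hN : 0 ≤ 2*phi x 1 t a ^ 2 + 2*x*phi x 1 t a + (t-a)*x) :
    √(Df x 1 t a) = (2*phi x 1 t a ^ 2 + 2*x*phi x 1 t a + (t-a)*x)/x := by
  have hDf : Df x 1 t a = ((2*phi x 1 t a ^ 2 + 2*x*phi x 1 t a + (t-a)*x)/x)^2 := by
    rw [div_pow, eq_div_iff (by positivity)]
    unfold Df
    linear_combination -4*phi x 1 t a * hφ
  rw [hDf, Real.sqrt_sq (by positivity)]

lemma rho_radicand_one_mul_sq (hx : 0 < x)
    (hφ : phi x 1 t a ^ 3 + 2*x*phi x 1 t a ^ 2 + (x^2 + (t-a)*x)*phi x 1 t a + t*x^2 = 0)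
    (hN : 0 ≤ 2*phi x 1 t a ^ 2 + 2*x*phi x 1 t a + (t-a)*x) :
    (2*(t - a + √(Df x 1 t a))*x - phi x 1 t a ^ 2)
      * (3*phi x 1 t a ^ 2 + 4*x*phi x 1 t a + x^2 + (t-a)*x)^2 = -x^2 * S x 1 t a := by
  rw [sqrt_Df_one hx hφ hN]
  unfold S
  field_simp
  linear_combination (27*phi x 1 t a ^ 3 + 54*phi x 1 t a ^ 2*x + 27*phi x 1 t a*x^2
    + 27*phi x 1 t a*x*t - 27*phi x 1 t a*x*a + 4*x^3 + 9*x^2*t - 36*x^2*a) * hφ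

lemma rho_one_div_sqrt_sub_eq {L R : ℝ} (ha : 0 < a) (hx : 0 < x) (hLx : L < x) (hxR : x < R)
    (hS : S x 1 t a = 4*a*x*((x-L)*(x-R))) (hg : g x 1 t a ≠ 0)
    (hN : 0 ≤ 2*phi x 1 t a ^ 2 + 2*x*phi x 1 t a + (t-a)*x)
    (hE : 0 < 3*phi x 1 t a ^ 2 + 4*x*phi x 1 t a + x^2 + (t-a)*x) :
    rho x 1 t a / √(x - L)
      = √(a*x*(R-x)) / (Real.pi*t*(3*phi x 1 t a ^ 2 + 4*x*phi x 1 t a + x^2 + (t-a)*x)) := by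
  set E := 3*phi x 1 t a ^ 2 + 4*x*phi x 1 t a + x^2 + (t-a)*x
  have hSneg : S x 1 t a ≤ 0 := by
    rw [hS]
    have : 0 < 4*a*x := by positivity
    nlinarith [mul_pos this (mul_pos (sub_pos.2 hLx) (sub_pos.2 hxR))]
  have hrad := rho_radicand_one_mul_sq hx (phi_one_cubic hSneg hg) hN
  have hrad' : 2*(t - a + √(Df x 1 t a))*x - phi x 1 t a ^ 2
      = (x - L) * ((2*x)^2 * (a*x*(R-x)) / E^2) := by
    rw [hS] at hrad
    field_simp
    linear_combination hrad
  have hsL : √(x - L) ≠ 0 := (Real.sqrt_pos.2 (sub_pos.2 hLx)).ne'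
  unfold rho
  rw [hrad', Real.sqrt_mul (sub_pos.2 hLx).le, Real.sqrt_div' _ (sq_nonneg E),
    Real.sqrt_mul' _ (by nlinarith [mul_pos ha hx]), Real.sqrt_sq (by positivity),
    Real.sqrt_sq hE.le]
  field_simp

end DensityOne

lemma continuous_g (r t a : ℝ) : Continuous fun x => g x r t a := by
  unfold g S
  fun_prop

lemma continuousAt_phi {x r t a : ℝ} (hg : g x r t a ≠ 0) :
    ContinuousAt (fun y => phi y r t a) x := by
  have hc : ContinuousAt (fun y => cbrt (g y r t a)) x :=
    (continuous_cbrt.comp (continuous_g r t a)).continuousAt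
  have hc0 := cbrt_ne_zero hg
  unfold phi
  fun_prop (disch := assumption)

section RootOfS

variable {x t a : ℝ}

lemma g_one_of_S_eq_zero (hS : S x 1 t a = 0) : g x 1 t a = -2*x^3 + (9*t+18*a)*x^2 := by
  rw [g_one_eq, hS]
  simp

lemma phi_one_of_S_eq_zero (hS : S x 1 t a = 0) (hg : 0 < g x 1 t a) :
    phi x 1 t a = -(2/3)*(x + √(x^2 + (3*a-3*t)*x)) := by
  rw [g_one_of_S_eq_zero hS] at hg
  have hdisc := discr_eq_S_one (x := x) (t := t) (a := a)
  rw [hS, mul_zero, sub_eq_zero] at hdisc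
  have hQ : 0 < x^2 + (3*a-3*t)*x := by
    by_contra! hQ
    nlinarith [Odd.pow_nonpos (by decide : Odd 3) hQ]
  set s := √(x^2 + (3*a-3*t)*x)
  have hs2 : s^2 = x^2 + (3*a-3*t)*x := Real.sq_sqrt hQ.le
  have hs : 0 < s := Real.sqrt_pos.2 hQ
  have hgs : g x 1 t a = 2*s^3 := by
    rw [g_one_of_S_eq_zero hS, ← pow_left_inj₀ hg.le (by positivity) two_ne_zero, hdisc, ← hs2]
    ring
  have hcbrt : cbrt (g x 1 t a) = cbrt 2 * s :=
    cbrt_eq_of_pow_three (by positivity [cbrt_pos two_pos]) (by rw [mul_pow, cbrt_pow_three, hgs])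
  have hk := (cbrt_pos two_pos).ne'
  unfold phi
  rw [hcbrt]
  field_simp
  linear_combination hs2

end RootOfS

lemma S_one_leftEdge {a t : ℝ} (ha : 0 < a) (ht : 0 ≤ t) : S (leftEdge a t) 1 t a = 0 := by
  rw [S_one_eq ha ht]
  ring

noncomputable def edgeConstant (a t : ℝ) : ℝ :=
  √(a * leftEdge a t * (rightEdge a t - leftEdge a t))
    / (Real.pi * t * (leftEdge a t ^ 2 + (3*a-3*t) * leftEdge a t))

section LeftEdge

variable {a t : ℝ} (ha : 0 < a) (ht : 0 < t) (hta : t < a)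
include ha ht hta

lemma g_one_leftEdge_pos : 0 < g (leftEdge a t) 1 t a := by
  have hL := leftEdge_pos ha ht hta
  have hLR := leftEdge_lt_rightEdge ha ht
  have hsum := leftEdge_add_rightEdge (t := t) ha.ne'
  rw [g_one_of_S_eq_zero (S_one_leftEdge ha ht.le)]
  have h2L : 2 * leftEdge a t < 9*t + 18*a := by nlinarith
  nlinarith [mul_pos (mul_pos hL hL) (sub_pos.2 h2L)]

lemma edgeConstant_pos : 0 < edgeConstant a t := by
  have hL := leftEdge_pos ha ht hta
  have hLR := leftEdge_lt_rightEdge ha ht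
  unfold edgeConstant
  apply div_pos (Real.sqrt_pos.2 (mul_pos (by positivity) (by linarith)))
  have : 0 < 3*a - 3*t := by linarith
  positivity

lemma tendsto_rho_one_div_sqrt :
    Tendsto (fun x => rho x 1 t a / √(x - leftEdge a t))
      (𝓝[>] leftEdge a t) (𝓝 (edgeConstant a t)) := by
  set L := leftEdge a t
  set R := rightEdge a t
  have hL : 0 < L := leftEdge_pos ha ht hta
  have hLR : L < R := leftEdge_lt_rightEdge ha ht
  have hgL := g_one_leftEdge_pos ha ht hta
  have hφL := phi_one_of_S_eq_zero (S_one_leftEdge ha ht.le) hgL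
  have hQ : 0 < L^2 + (3*a-3*t)*L := by nlinarith
  set s := √(L^2 + (3*a-3*t)*L)
  have hs2 : s^2 = L^2 + (3*a-3*t)*L := Real.sq_sqrt hQ.le
  have hsL : L < s := by nlinarith [Real.sqrt_nonneg (L^2 + (3*a-3*t)*L)]
  have hEL : 3*phi L 1 t a ^ 2 + 4*L*phi L 1 t a + L^2 + (t-a)*L = L^2 + (3*a-3*t)*L := by
    rw [hφL]
    linear_combination (4/3) * hs2
  -- at `L` the quantity below equals `(5s - L)(s + L)/9`
  have hNL : 0 < 2*phi L 1 t a ^ 2 + 2*L*phi L 1 t a + (t-a)*L := by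
    rw [hφL]
    nlinarith [mul_pos (by linarith : 0 < 5*s - L) (by linarith : 0 < s + L)]
  have hφc := continuousAt_phi hgL.ne'
  have hgc := (continuous_g 1 t a).continuousAt (x := L)
  have hEc : ContinuousAt (fun x => 3*phi x 1 t a ^ 2 + 4*x*phi x 1 t a + x^2 + (t-a)*x) L := by
    fun_prop
  have hNc : ContinuousAt (fun x => 2*phi x 1 t a ^ 2 + 2*x*phi x 1 t a + (t-a)*x) L := by
    fun_prop
  have hF : ContinuousAt (fun x => √(a*x*(R-x))
      / (Real.pi*t*(3*phi x 1 t a ^ 2 + 4*x*phi x 1 t a + x^2 + (t-a)*x))) L :=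
    ContinuousAt.div (by fun_prop) (by fun_prop) (by rw [hEL]; positivity)
  have hFL := hF.continuousWithinAt (s := Set.Ioi L)
  rw [ContinuousWithinAt, hEL] at hFL
  refine hFL.congr' ?_
  filter_upwards [self_mem_nhdsWithin,
    nhdsWithin_le_nhds (hgc.eventually (eventually_gt_nhds hgL)),
    nhdsWithin_le_nhds (hNc.eventually (eventually_gt_nhds hNL)),
    nhdsWithin_le_nhds (hEc.eventually (eventually_gt_nhds (hEL ▸ hQ))),
    nhdsWithin_le_nhds (eventually_lt_nhds hLR)] with x hLx hgx hNx hEx hxR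
  exact (rho_one_div_sqrt_sub_eq ha (hL.trans hLx) hLx hxR (S_one_eq ha ht.le x) hgx.ne'
    hNx.le hEx).symm

lemma rpow_mul_edgeConstant_eq :
    (a - t) ^ ((5:ℝ)/2) * edgeConstant a t
      = a^2 * rightEdge a t * √(rightEdge a t * (rightEdge a t - leftEdge a t))
        / (Real.pi * t * ((a-t)^2 + 3*a*rightEdge a t)) := by
  set L := leftEdge a t
  set R := rightEdge a t
  have hL : 0 < L := leftEdge_pos ha ht hta
  have hLR : L < R := leftEdge_lt_rightEdge ha ht
  have hprod : a*(L*R) = (a-t)^3 := leftEdge_mul_rightEdge ha ht.le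
  have hu : 0 < a - t := by linarith
  have hR : 0 < R := hL.trans hLR
  have h3 : 0 < 3*a - 3*t := by linarith
  have h52 : (a-t) ^ ((5:ℝ)/2) = √((a-t)^5) := by
    rw [Real.sqrt_eq_rpow, ← Real.rpow_natCast, ← Real.rpow_mul hu.le]
    norm_num
  have hroot : √((a-t)^5) * √(a*L*(R-L)) = (a-t)*a*L * √(R*(R-L)) := by
    rw [← Real.sqrt_mul (by positivity),
      show (a-t)^5 * (a*L*(R-L)) = ((a-t)*a*L)^2 * (R*(R-L)) by
        linear_combination -((a-t)^2*a*L*(R-L)) * hprod,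
      Real.sqrt_mul (sq_nonneg _), Real.sqrt_sq (by positivity)]
  unfold edgeConstant
  rw [h52, ← mul_div_assoc, hroot, div_eq_div_iff (by positivity) (by positivity)]
  linear_combination (-(a*L*√(R*(R-L))*Real.pi*t)) * hprod

end LeftEdge

lemma tendsto_rpow_mul_edgeConstant {a : ℝ} (ha : 0 < a) :
    Tendsto (fun t => (a - t) ^ ((5:ℝ)/2) * edgeConstant a t)
      (𝓝[Set.Ioo 0 a] a) (𝓝 (9*a/(4*Real.pi))) := by
  have hLc := continuous_leftEdge (a := a)
  have hRc := continuous_rightEdge (a := a)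
  have hK : ContinuousAt (fun t => a^2 * rightEdge a t
      * √(rightEdge a t * (rightEdge a t - leftEdge a t))
      / (Real.pi * t * ((a-t)^2 + 3*a*rightEdge a t))) a :=
    ContinuousAt.div (by fun_prop) (by fun_prop) (by rw [rightEdge_self ha]; positivity)
  have hKa := hK.continuousWithinAt (s := Set.Ioo 0 a)
  rw [ContinuousWithinAt, leftEdge_self ha, rightEdge_self ha, sub_zero,
    Real.sqrt_mul_self (by positivity)] at hKa
  convert hKa.congr' _ using 2
  · field_simp
    ring
  filter_upwards [self_mem_nhdsWithin] with t ⟨ht, hta⟩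
  exact (rpow_mul_edgeConstant_eq ha ht hta).symm

theorem stmt_16 (a : ℝ) (ha : 0 < a)
    (xL : ℝ → ℝ)
    (hxL : ∀ t, xL t = (8*a^2 + 20*a*t - t^2 - Real.sqrt t * (8*a+t) ^ ((3:ℝ)/2))/(8*a)) :
    ∃ C : ℝ → ℝ,
      (∀ t : ℝ, 0 < t → t < a →
        0 < C t ∧
        Filter.Tendsto (fun x : ℝ => rho x 1 t a / Real.sqrt (x - xL t))
          (nhdsWithin (xL t) (Set.Ioi (xL t))) (nhds (C t)))
      ∧ Filter.Tendsto (fun t : ℝ => (a - t) ^ ((5:ℝ)/2) * C t)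
          (nhdsWithin a (Set.Ioo 0 a)) (nhds (9*a/(4*Real.pi))) := by
  obtain rfl : xL = leftEdge a := funext hxL
  exact ⟨edgeConstant a, fun t ht hta =>
    ⟨edgeConstant_pos ha ht hta, tendsto_rho_one_div_sqrt ha ht hta⟩,
    tendsto_rpow_mul_edgeConstant ha⟩
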